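/- (MinHash collision probability equals Jaccard similarity, the property of MinHash on which the encoding is based.) Let Ω = Fin m be a finite linearly ordered universe and let A, B ⊆ Ω be finite sets with A nonempty and B nonempty. If π is a permutation of Ω chosen uniformly at random, then the probability that the minimum of the image π(A) equals the minimum of the image π(B) is exactly the Jaccard similarity of A and B: Pr_π[ min π(A) = min π(B) ] = |A ∩ B| / |A ∪ B|. -/

import Mathlib

/-!
Put `U = A ∪ B` and let `a_π ∈ U` be the point that `π` sends to `min π(U)`. The minima of `π(A)`
and `π(B)` coincide exactly when `a_π ∈ A ∩ B`. For `x, y ∈ U`, replacing `π` by `π ∘ (x y)`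
leaves `π(U)` unchanged and exchanges the events `a_π = x` and `a_π = y`, so `a_π` is uniformly
distributed on `U`.
-/

open Finset

theorem Finset.min'_eq_min'_iff_min'_union_mem_inter {α : Type*} [LinearOrder α]
    {s t : Finset α} (hs : s.Nonempty) (ht : t.Nonempty) :
    s.min' hs = t.min' ht ↔ (s ∪ t).min' (hs.mono subset_union_left) ∈ s ∩ t := by
  rw [min'_union hs ht, mem_inter]
  constructor
  · intro h
    rw [h, inf_idem]
    exact ⟨h ▸ s.min'_mem hs, t.min'_mem ht⟩
  · rintro ⟨hmem_s, hmem_t⟩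
    exact le_antisymm (le_inf_iff.mp (s.min'_le _ hmem_s)).2 (le_inf_iff.mp (t.min'_le _ hmem_t)).1

theorem Finset.image_swap_eq_self {α : Type*} [DecidableEq α] {U : Finset α} {x y : α}
    (hx : x ∈ U) (hy : y ∈ U) : U.image (Equiv.swap x y) = U := by
  have h : U.map (Equiv.swap x y : α ↪ α) = U := map_perm fun z hz => by
    obtain ⟨-, rfl | rfl⟩ := Equiv.swap_apply_ne_self_iff.mp hz
    exacts [hx, hy]
  rwa [map_eq_image] at h

namespace MinHash

variable {α : Type*} [LinearOrder α]

noncomputable def argmin (U : Finset α) (hU : U.Nonempty) (π : Equiv.Perm α) : α :=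
  π.symm ((U.image π).min' (hU.image π))

variable {U : Finset α} (hU : U.Nonempty)

@[simp]
theorem apply_argmin (π : Equiv.Perm α) : π (argmin U hU π) = (U.image π).min' (hU.image π) :=
  π.apply_symm_apply _

theorem argmin_mem_iff (π : Equiv.Perm α) {S : Finset α} :
    argmin U hU π ∈ S ↔ (U.image π).min' (hU.image π) ∈ S.image π := by
  rw [← apply_argmin hU, π.injective.mem_finset_image]

theorem min'_image_eq_iff_argmin_mem_inter (π : Equiv.Perm α) {A B : Finset α}
    (hA : A.Nonempty) (hB : B.Nonempty) :
    (A.image π).min' (hA.image π) = (B.image π).min' (hB.image π) ↔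
      argmin (A ∪ B) (hA.mono subset_union_left) π ∈ A ∩ B := by
  rw [min'_eq_min'_iff_min'_union_mem_inter, argmin_mem_iff, image_inter _ _ π.injective]
  simp only [image_union]

theorem argmin_mul_swap (π : Equiv.Perm α) {x y : α} (hx : x ∈ U) (hy : y ∈ U) :
    argmin U hU (π * Equiv.swap x y) = Equiv.swap x y (argmin U hU π) := by
  have h : U.image (π * Equiv.swap x y) = U.image π := by
    rw [Equiv.Perm.coe_mul, ← image_image, image_swap_eq_self hx hy]
  simp only [argmin, h]
  simp only [Equiv.Perm.mul_def, Equiv.symm_trans, Equiv.symm_swap, Equiv.trans_apply]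

theorem argmin_mem (π : Equiv.Perm α) : argmin U hU π ∈ U :=
  (argmin_mem_iff hU π).mpr (min'_mem _ _)

variable [Fintype α]

theorem card_filter_argmin_eq_eq {x y : α} (hx : x ∈ U) (hy : y ∈ U) :
    #{π : Equiv.Perm α | argmin U hU π = x} = #{π : Equiv.Perm α | argmin U hU π = y} := by
  refine card_equiv (Equiv.mulRight (Equiv.swap x y)) fun π => ?_
  simp only [mem_filter, mem_univ, true_and, Equiv.coe_mulRight, argmin_mul_swap hU π hx hy,
    Equiv.swap_apply_eq_iff, Equiv.swap_apply_right]

theorem card_filter_argmin_mem {S : Finset α} (hS : S ⊆ U) {x : α} (hx : x ∈ U) :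
    #{π : Equiv.Perm α | argmin U hU π ∈ S} = #S * #{π : Equiv.Perm α | argmin U hU π = x} := by
  have hmaps : Set.MapsTo (argmin U hU) ↑({π | argmin U hU π ∈ S} : Finset (Equiv.Perm α)) ↑S :=
    fun π hπ => (mem_filter.mp hπ).2
  rw [card_eq_sum_card_fiberwise hmaps, ← smul_eq_mul, ← sum_const]
  refine sum_congr rfl fun y hy => ?_
  rw [filter_filter, ← card_filter_argmin_eq_eq hU (hS hy) hx]
  exact congrArg card (filter_congr fun π _ => and_iff_right_of_imp fun h => h ▸ hy)

theorem card_filter_argmin_mem_mul_card {S : Finset α} (hS : S ⊆ U) :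
    #{π : Equiv.Perm α | argmin U hU π ∈ S} * #U = #S * Fintype.card (Equiv.Perm α) := by
  obtain ⟨x, hx⟩ := id hU
  have hU_total : #{π : Equiv.Perm α | argmin U hU π ∈ U} = Fintype.card (Equiv.Perm α) := by
    rw [filter_true_of_mem fun π _ => argmin_mem hU π, card_univ]
  rw [← hU_total, card_filter_argmin_mem hU hS hx, card_filter_argmin_mem hU subset_rfl hx]
  ring

end MinHash

/-- MinHash collision probability equals Jaccard similarity: for nonempty finite
sets `A, B ⊆ Fin m` and a uniformly random permutation `π` of `Fin m`, the
probability that `min π(A) = min π(B)` equals `|A ∩ B| / |A ∪ B|`. -/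
theorem minhash_collision_prob_eq_jaccard (m : ℕ) (A B : Finset (Fin m))
    (hA : A.Nonempty) (hB : B.Nonempty) :
    ((Finset.univ.filter (fun π : Equiv.Perm (Fin m) =>
        (A.image π).min' (hA.image π) = (B.image π).min' (hB.image π))).card : ℝ) /
      (Fintype.card (Equiv.Perm (Fin m)) : ℝ) =
    ((A ∩ B).card : ℝ) / ((A ∪ B).card : ℝ) := by
  have hU : (A ∪ B).Nonempty := hA.mono subset_union_left
  simp_rw [MinHash.min'_image_eq_iff_argmin_mem_inter _ hA hB]
  rw [div_eq_div_iff (by positivity) (Nat.cast_ne_zero.mpr hU.card_pos.ne')]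
  exact_mod_cast MinHash.card_filter_argmin_mem_mul_card hU inter_subset_union
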